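/- For the second-order semicircle moment function, all second-order free cumulants vanish: sc_∘∘[i_1,...,i_n | i_{n+1},...,i_{n+m}] = 0 for all n, m ≥ 1, when sc[i_1,...,i_n|...] is the number of non-crossing pairings of the (n,m)-annulus and sc[i_1,...,i_n] = ∫ x^n ρ_sc(x) dx. -/
import Mathlib


open Equiv

/-- The reflection length of a permutation: the minimal number of transpositions needed to
write it as a product. -/
noncomputable def reflLen {α : Type*} [DecidableEq α] [Fintype α] (σ : Equiv.Perm α) : ℕ :=
  sInf {m | ∃ l : List (Equiv.Perm α),
    l.length = m ∧ (∀ τ ∈ l, τ.IsSwap) ∧ l.prod = σ}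

/-- The number of cycles of a permutation, counting fixed points as cycles of length one. -/
noncomputable def cycleCount {α : Type*} [DecidableEq α] [Fintype α] (σ : Equiv.Perm α) : ℕ :=
  σ.cycleType.card + (Fintype.card α - σ.support.card)

/-- The boundary permutation `γ = (1 ... k)(k+1 ... k+ℓ)` of the `(k,ℓ)`-annulus, rotating the
outer circle `Fin k` and the inner circle `Fin ℓ`. -/
def annGamma (k l : ℕ) : Equiv.Perm (Fin k ⊕ Fin l) :=
  Equiv.sumCongr (finRotate k) (finRotate l)

/-- A permutation of the `(k,ℓ)`-annulus connects the two circles if some cycle contains a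
point of each. -/
def Connects {k l : ℕ} (π : Equiv.Perm (Fin k ⊕ Fin l)) : Prop :=
  ∃ (x : Fin k) (y : Fin l), π.SameCycle (Sum.inl x) (Sum.inr y)

/-- Annular non-crossing permutations of the `(k,ℓ)`-annulus: permutations connecting the two
circles whose cycles can be drawn in the annulus without crossings and with standard
orientation; equivalently (Mingo–Nica), permutations `π` connecting the two circles such that
the reflection lengths satisfy `|π| + |π⁻¹γ| = |γ| + 2`. -/
def IsAnnularNC (k l : ℕ) (π : Equiv.Perm (Fin k ⊕ Fin l)) : Prop :=
  Connects π ∧ reflLen π + reflLen (π⁻¹ * annGamma k l) = reflLen (annGamma k l) + 2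

open Finset

/-- Two elements lie in the same block of a finpartition. -/
def SameBlock {α : Type*} [DecidableEq α] {s : Finset α} (P : Finpartition s) (a b : α) : Prop :=
  ∃ B ∈ P.parts, a ∈ B ∧ b ∈ B

/-- A partition of the linearly ordered set `Fin n` is non-crossing. -/
def IsNoncrossing {n : ℕ} {s : Finset (Fin n)} (π : Finpartition s) : Prop :=
  ∀ a b c d : Fin n, a < c → c < b → b < d →
    SameBlock π a b → SameBlock π c d → SameBlock π a c

/-- A pairing: a permutation all of whose cycles have length exactly two. -/
def IsPairing {α : Type*} (π : Equiv.Perm α) : Prop :=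
  ∀ a, π a ≠ a ∧ π (π a) = a

/-- First-order free cumulants of the semicircle law as a function of the block size:
`sc_∘ = 1` on blocks of size two and `0` otherwise. -/
noncomputable def scCum (j : ℕ) : ℝ := if j = 2 then 1 else 0

/-- The product of `f` over the cycle sizes of a permutation (fixed points counting as cycles
of size one). -/
noncomputable def cycleProd {α : Type*} [DecidableEq α] [Fintype α]
    (π : Equiv.Perm α) (f : ℕ → ℝ) : ℝ :=
  (π.cycleType.map f).prod * f 1 ^ (Fintype.card α - π.support.card)

/-- The second-order semicircle moment `sc[S₁|S₂]`: the number of non-crossing pairings of the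
`(n,m)`-annulus. -/
noncomputable def scAnnMoment (n m : ℕ) : ℝ :=
  Set.ncard {π : Equiv.Perm (Fin n ⊕ Fin m) | IsAnnularNC n m π ∧ IsPairing π}

lemma isPairing_iff {α : Type*} [DecidableEq α] [Fintype α] (π : Equiv.Perm α) :
    IsPairing π ↔ π ^ 2 = 1 ∧ π.support = Finset.univ := by
  constructor
  · intro h
    refine ⟨?_, ?_⟩
    · ext a
      rw [sq]
      simp [Equiv.Perm.mul_apply, (h a).2]
    · ext a
      simp [Equiv.Perm.mem_support, (h a).1]
  · rintro ⟨h2, hs⟩ a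
    refine ⟨?_, ?_⟩
    · have := Finset.mem_univ a
      rw [← hs, Equiv.Perm.mem_support] at this
      exact this
    · have : (π ^ 2) a = a := by rw [h2]; rfl
      rwa [sq, Equiv.Perm.mul_apply] at this

lemma cycleProd_scCum_pairing {α : Type*} [DecidableEq α] [Fintype α] {π : Equiv.Perm α}
    (hp : IsPairing π) : cycleProd π scCum = 1 := by
  classical
  · obtain ⟨h2, hs⟩ := (isPairing_iff π).1 hp
    unfold cycleProd
    rw [hs, Finset.card_univ, Nat.sub_self, pow_zero, mul_one]
    apply Multiset.prod_eq_one
    intro x hx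
    obtain ⟨c, hc, rfl⟩ := Multiset.mem_map.1 hx
    have hdvd : c ∣ 2 := by
      have h1 : c ∣ π.cycleType.lcm := Multiset.dvd_lcm hc
      rw [Equiv.Perm.lcm_cycleType] at h1
      exact h1.trans (orderOf_dvd_of_pow_eq_one h2)
    have h2c := Equiv.Perm.two_le_of_mem_cycleType hc
    have hc2 : c = 2 := le_antisymm (Nat.le_of_dvd two_pos hdvd) h2c
    simp [hc2, scCum]

lemma cycleProd_scCum_not_pairing {α : Type*} [DecidableEq α] [Fintype α] {π : Equiv.Perm α}
    (hp : ¬ IsPairing π) : cycleProd π scCum = 0 := by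
  classical
  · by_cases hs : π.support = Finset.univ
    · have h2 : π ^ 2 ≠ 1 := fun h => hp ((isPairing_iff π).2 ⟨h, hs⟩)
      have hord : ¬ orderOf π ∣ 2 := fun h => h2 (orderOf_dvd_iff_pow_eq_one.1 h)
      rw [← Equiv.Perm.lcm_cycleType] at hord
      obtain ⟨c, hc, hcd⟩ : ∃ c ∈ π.cycleType, ¬ c ∣ 2 := by
        by_contra hh
        push_neg at hh
        exact hord (Multiset.lcm_dvd.2 hh)
      have hc0 : scCum c = 0 := by
        have : c ≠ 2 := fun h => hcd (by rw [h])
        simp [scCum, this]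
      unfold cycleProd
      have h0 : (0 : ℝ) ∈ π.cycleType.map scCum := Multiset.mem_map.2 ⟨c, hc, hc0⟩
      rw [Multiset.prod_eq_zero h0, zero_mul]
    · unfold cycleProd
      have hlt : π.support.card < Fintype.card α := by
        rw [← Finset.card_univ]
        exact Finset.card_lt_card (Finset.ssubset_univ_iff.2 hs)
      have h1 : scCum 1 = 0 := by simp [scCum]
      rw [h1, zero_pow (Nat.sub_ne_zero_of_lt hlt), mul_zero]

lemma firstSum_eq (n m : ℕ) :
    (∑ᶠ (π : Equiv.Perm (Fin n ⊕ Fin m)) (_ : IsAnnularNC n m π), cycleProd π scCum)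
      = scAnnMoment n m := by
  classical
  have key : ∀ π : Equiv.Perm (Fin n ⊕ Fin m),
      (∑ᶠ (_ : IsAnnularNC n m π), cycleProd π scCum)
        = if IsAnnularNC n m π ∧ IsPairing π then 1 else 0 := by
    intro π
    rw [finsum_eq_if]
    by_cases h1 : IsAnnularNC n m π <;> by_cases h2 : IsPairing π <;>
      simp [h1, h2, cycleProd_scCum_pairing, cycleProd_scCum_not_pairing]
  rw [finsum_eq_sum_of_fintype]
  simp_rw [key]
  rw [Finset.sum_boole]
  rw [scAnnMoment, Set.ncard_eq_toFinset_card']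
  congr 2
  simp [Set.toFinset_setOf]

lemma parts_eq_of_card {n : ℕ} (π₁ : Finpartition (univ : Finset (Fin n)))
    {U : Finset (Fin n)} (hU : U ∈ π₁.parts) (hc : U.card = n) :
    U = univ ∧ π₁.parts = {univ} := by
  have hUuniv : U = univ := by
    apply Finset.eq_of_subset_of_card_le (Finset.subset_univ U)
    simp [hc]
  subst hUuniv
  refine ⟨rfl, Finset.eq_singleton_iff_unique_mem.2 ⟨hU, ?_⟩⟩
  intro B hB
  by_contra hne
  have hdisj : Disjoint B (univ : Finset (Fin n)) := π₁.disjoint hB hU hne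
  obtain ⟨a, ha⟩ := π₁.nonempty_of_mem_parts hB
  exact Finset.disjoint_left.1 hdisj ha (Finset.mem_univ a)


lemma indiscrete_univ_nc {n : ℕ} (h : (univ : Finset (Fin n)) ≠ ⊥) :
    IsNoncrossing (Finpartition.indiscrete h) := by
  intro a b c d _ _ _ _ _
  exact ⟨univ, by simp [Finpartition.indiscrete_parts], Finset.mem_univ a, Finset.mem_univ c⟩

/-- For the second-order semicircle moment function, all second-order free cumulants vanish:
any `cc` (depending on the sizes of the two marked blocks) satisfying the second-order
moment–cumulant relation
`sc[S₁|S₂] = Σ_{π ∈ NCP→(n,m)} Π_{B ∈ π} sc_∘[B] + Σ_{marked π₁×π₂} cc[U₁|U₂] Π sc_∘[B]`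
is identically zero. -/
theorem second_order_semicircle_cumulants_vanish
    (cc : ℕ → ℕ → ℝ)
    (hrel : ∀ n m : ℕ, 0 < n → 0 < m →
      scAnnMoment n m =
        (∑ᶠ (π : Equiv.Perm (Fin n ⊕ Fin m)) (_ : IsAnnularNC n m π), cycleProd π scCum) +
        ∑ᶠ (π₁ : Finpartition (univ : Finset (Fin n))) (_ : IsNoncrossing π₁),
          ∑ᶠ (π₂ : Finpartition (univ : Finset (Fin m))) (_ : IsNoncrossing π₂),
            ∑ U₁ ∈ π₁.parts, ∑ U₂ ∈ π₂.parts,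
              cc U₁.card U₂.card *
                (∏ B ∈ π₁.parts.erase U₁, scCum B.card) *
                (∏ B ∈ π₂.parts.erase U₂, scCum B.card)) :
    ∀ n m : ℕ, 0 < n → 0 < m → cc n m = 0 := by
  classical
  have key : ∀ k : ℕ, ∀ n m : ℕ, n + m = k → 0 < n → 0 < m → cc n m = 0 := by
    intro k
    induction k using Nat.strong_induction_on with
    | _ k IH =>
      intro n m hk hn hm
      have hne1 : (univ : Finset (Fin n)) ≠ ⊥ := by
        haveI : Nonempty (Fin n) := Fin.pos_iff_nonempty.1 hn
        simpa [Finset.bot_eq_empty] using Finset.univ_nonempty.ne_empty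
      have hne2 : (univ : Finset (Fin m)) ≠ ⊥ := by
        haveI : Nonempty (Fin m) := Fin.pos_iff_nonempty.1 hm
        simpa [Finset.bot_eq_empty] using Finset.univ_nonempty.ne_empty
      set T1 : Finpartition (univ : Finset (Fin n)) := Finpartition.indiscrete hne1 with hT1
      set T2 : Finpartition (univ : Finset (Fin m)) := Finpartition.indiscrete hne2 with hT2
      -- IH applied to block sizes
      have IHcc : ∀ a b : ℕ, 0 < a → 0 < b → a ≤ n → b ≤ m → (a < n ∨ b < m) →
          cc a b = 0 := by
        intro a b ha hb han hbm hlt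
        refine IH (a + b) ?_ a b rfl ha hb
        omega
      -- bounds on block cards
      have cardb1 : ∀ (π₁ : Finpartition (univ : Finset (Fin n))) (U : Finset (Fin n)),
          U ∈ π₁.parts → 0 < U.card ∧ U.card ≤ n := by
        intro π₁ U hU
        refine ⟨Finset.card_pos.2 (π₁.nonempty_of_mem_parts hU), ?_⟩
        simpa using Finset.card_le_card (π₁.le hU)
      have cardb2 : ∀ (π₂ : Finpartition (univ : Finset (Fin m))) (U : Finset (Fin m)),
          U ∈ π₂.parts → 0 < U.card ∧ U.card ≤ m := by
        intro π₂ U hU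
        refine ⟨Finset.card_pos.2 (π₂.nonempty_of_mem_parts hU), ?_⟩
        simpa using Finset.card_le_card (π₂.le hU)
      -- if a block has full card, the partition is T1/T2
      have full1 : ∀ (π₁ : Finpartition (univ : Finset (Fin n))) (U : Finset (Fin n)),
          U ∈ π₁.parts → U.card = n → π₁ = T1 := by
        intro π₁ U hU hc
        obtain ⟨-, hparts⟩ := parts_eq_of_card π₁ hU hc
        apply Finpartition.ext
        rw [hparts, hT1]
        simp [Finpartition.indiscrete_parts]
      have full2 : ∀ (π₂ : Finpartition (univ : Finset (Fin m))) (U : Finset (Fin m)),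
          U ∈ π₂.parts → U.card = m → π₂ = T2 := by
        intro π₂ U hU hc
        obtain ⟨-, hparts⟩ := parts_eq_of_card π₂ hU hc
        apply Finpartition.ext
        rw [hparts, hT2]
        simp [Finpartition.indiscrete_parts]
      have hS : (∑ᶠ (π₁ : Finpartition (univ : Finset (Fin n))) (_ : IsNoncrossing π₁),
          ∑ᶠ (π₂ : Finpartition (univ : Finset (Fin m))) (_ : IsNoncrossing π₂),
            ∑ U₁ ∈ π₁.parts, ∑ U₂ ∈ π₂.parts,
              cc U₁.card U₂.card *
                (∏ B ∈ π₁.parts.erase U₁, scCum B.card) *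
                (∏ B ∈ π₂.parts.erase U₂, scCum B.card)) = 0 := by
        have h := hrel n m hn hm
        rw [firstSum_eq] at h
        linarith
      -- evaluate the big sum to cc n m
      have hmain : (∑ᶠ (π₁ : Finpartition (univ : Finset (Fin n))) (_ : IsNoncrossing π₁),
          ∑ᶠ (π₂ : Finpartition (univ : Finset (Fin m))) (_ : IsNoncrossing π₂),
            ∑ U₁ ∈ π₁.parts, ∑ U₂ ∈ π₂.parts,
              cc U₁.card U₂.card *
                (∏ B ∈ π₁.parts.erase U₁, scCum B.card) *
                (∏ B ∈ π₂.parts.erase U₂, scCum B.card)) = cc n m := by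
        rw [finsum_eq_single _ T1]
        · rw [finsum_eq_if, if_pos (by rw [hT1]; exact indiscrete_univ_nc hne1)]
          rw [finsum_eq_single _ T2]
          · rw [finsum_eq_if, if_pos (by rw [hT2]; exact indiscrete_univ_nc hne2)]
            have hp1 : T1.parts = {univ} := by rw [hT1]; simp
            have hp2 : T2.parts = {univ} := by rw [hT2]; simp
            rw [hp1, hp2]
            simp [Finset.erase_singleton]
          · -- π₂ ≠ T2 contributes zero
            intro π₂ hπ₂
            rw [finsum_eq_if]
            have hz : (∑ U₁ ∈ T1.parts, ∑ U₂ ∈ π₂.parts,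
                cc U₁.card U₂.card *
                  (∏ B ∈ T1.parts.erase U₁, scCum B.card) *
                  (∏ B ∈ π₂.parts.erase U₂, scCum B.card)) = 0 := by
              apply Finset.sum_eq_zero
              intro U₁ hU₁
              apply Finset.sum_eq_zero
              intro U₂ hU₂
              obtain ⟨hb1, hb2⟩ := cardb1 T1 U₁ hU₁
              obtain ⟨hb3, hb4⟩ := cardb2 π₂ U₂ hU₂
              have hlt : U₂.card < m := lt_of_le_of_ne hb4 (fun h => hπ₂ (full2 π₂ U₂ hU₂ h))
              rw [IHcc U₁.card U₂.card hb1 hb3 hb2 hb4 (Or.inr hlt), zero_mul, zero_mul]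
            rw [hz]
            simp
        · -- π₁ ≠ T1 contributes zero
          intro π₁ hπ₁
          have hz : (∑ᶠ (π₂ : Finpartition (univ : Finset (Fin m))) (_ : IsNoncrossing π₂),
              ∑ U₁ ∈ π₁.parts, ∑ U₂ ∈ π₂.parts,
                cc U₁.card U₂.card *
                  (∏ B ∈ π₁.parts.erase U₁, scCum B.card) *
                  (∏ B ∈ π₂.parts.erase U₂, scCum B.card)) = 0 := by
            apply finsum_eq_zero_of_forall_eq_zero
            intro π₂
            rw [finsum_eq_if]
            have hz2 : (∑ U₁ ∈ π₁.parts, ∑ U₂ ∈ π₂.parts,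
                cc U₁.card U₂.card *
                  (∏ B ∈ π₁.parts.erase U₁, scCum B.card) *
                  (∏ B ∈ π₂.parts.erase U₂, scCum B.card)) = 0 := by
              apply Finset.sum_eq_zero
              intro U₁ hU₁
              apply Finset.sum_eq_zero
              intro U₂ hU₂
              obtain ⟨hb1, hb2⟩ := cardb1 π₁ U₁ hU₁
              obtain ⟨hb3, hb4⟩ := cardb2 π₂ U₂ hU₂
              have hlt : U₁.card < n := lt_of_le_of_ne hb2 (fun h => hπ₁ (full1 π₁ U₁ hU₁ h))
              rw [IHcc U₁.card U₂.card hb1 hb3 hb2 hb4 (Or.inl hlt), zero_mul, zero_mul]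
            rw [hz2]
            simp
          rw [finsum_eq_if]
          rw [hz]
          simp
      rw [hmain] at hS
      exact hS
  intro n m hn hm
  exact key (n + m) n m rfl hn hm
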